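/- arXiv:2304.08311 — 3 statements merged into one kernel-verified Lean document; each statement's English description precedes it below -/
import Mathlib

section
/- For parameters ρ, χ, K ∈ ℝ, define on ℝ³ the oriented octupolar potential Φₒ^{(ρ,χ,K)}(x₁,x₂,x₃) = 3ρcosχ·x₁x₂x₃ + K(x₂²−3x₁²)x₂ + (x₃²−3x₂²)x₃ + (3/2)(ρsinχ−1)(x₁²−x₂²)x₃. Then for all (x₁′,x₂′,x₃′) ∈ ℝ³, Φₒ^{(ρ,χ,K)}(cos(π/3)x₁′ − sin(π/3)x₂′, −sin(π/3)x₁′ − cos(π/3)x₂′, x₃′) = Φₒ^{(ρ,−χ−π/3,K)}(x₁′,x₂′,x₃′); that is, the mirror reflection with ϑ = π/3 maps the oriented potential with parameter χ to the one with parameter χ′ = −χ−π/3. -/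
open Real

/-- The oriented octupolar potential with parameters `(ρ, χ, K)`. -/
noncomputable def orientedPot (ρ χ K x₁ x₂ x₃ : ℝ) : ℝ :=
  3 * ρ * Real.cos χ * x₁ * x₂ * x₃ + K * (x₂ ^ 2 - 3 * x₁ ^ 2) * x₂
    + (x₃ ^ 2 - 3 * x₂ ^ 2) * x₃
    + (3 / 2) * (ρ * Real.sin χ - 1) * (x₁ ^ 2 - x₂ ^ 2) * x₃

theorem stmt7 (ρ χ K x₁' x₂' x₃' : ℝ) :
    orientedPot ρ χ K
        (Real.cos (π / 3) * x₁' - Real.sin (π / 3) * x₂')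
        (-(Real.sin (π / 3)) * x₁' - Real.cos (π / 3) * x₂')
        x₃'
      = orientedPot ρ (-χ - π / 3) K x₁' x₂' x₃' := by
  have h : -χ - π / 3 = -(χ + π / 3) := by ring
  simp only [orientedPot, h, Real.cos_neg, Real.sin_neg,
    Real.cos_add, Real.sin_add, Real.cos_pi_div_three, Real.sin_pi_div_three]
  have h3 : Real.sqrt 3 ^ 2 = 3 := Real.sq_sqrt (by norm_num)
  linear_combination
    ((-3/8) * x₂' ^ 2 * x₃' + (-3/8) * x₁' ^ 2 * x₃' + (3/8) * K * x₂' ^ 3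
      + (3/8) * K * x₁' * x₂' ^ 2 * Real.sqrt 3 + (-9/8) * K * x₁' ^ 2 * x₂'
      + (-1/8) * K * x₁' ^ 3 * Real.sqrt 3 + (3/8) * ρ * Real.sin χ * x₂' ^ 2 * x₃'
      + (-3/8) * ρ * Real.sin χ * x₁' ^ 2 * x₃'
      + (3/4) * ρ * Real.cos χ * x₁' * x₂' * x₃') * h3
end

section
/- Let A₂, A₃ ∈ ℝ with A₂ ≠ 0, and consider the trace-type octupolar potential Φₜ(x₁,x₂,x₃) = A₂x₁²x₂ + A₃x₂²x₃ on ℝ³. If 0 < |A₃| < √2·|A₂|, then Φₜ has exactly ten critical points on the unit sphere S² (five in each open hemisphere x₃ > 0 and x₃ < 0). If |A₃| > √2·|A₂|, then Φₜ has exactly six critical points on S² (three in each open hemisphere). -/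
/-- The trace-type octupolar potential `Φₜ(x) = A₂x₁²x₂ + A₃x₂²x₃`. -/
noncomputable def tracePot (A₂ A₃ : ℝ) (x : EuclideanSpace ℝ (Fin 3)) : ℝ :=
  A₂ * (x 0) ^ 2 * x 1 + A₃ * (x 1) ^ 2 * x 2

/-- The set of critical points of the trace-type potential on the unit sphere. -/
noncomputable def traceCrit (A₂ A₃ : ℝ) : Set (EuclideanSpace ℝ (Fin 3)) :=
  {x | (x 0) ^ 2 + (x 1) ^ 2 + (x 2) ^ 2 = 1 ∧
    ∃ c : ℝ, gradient (tracePot A₂ A₃) x = c • x}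

/-!
Coordinates are indexed from `0` here: `xᵢ` stands for `x i`, so `Φₜ = A₂x₀²x₁ + A₃x₁²x₂`.
Writing `∇Φₜ(x) = c x` in coordinates and eliminating the multiplier `c` splits the critical
points according to whether `x₀ = 0`. In the plane `x₀ = 0` they are the poles and the four
points with `x₁² = 2x₂² = 2/3`, whatever `A₂, A₃` are. Off that plane they satisfy
`A₃x₁ = 2A₂x₂` and `A₃²x₀² = 4(2A₂² - A₃²)x₂²`, so they exist only when `A₃² < 2A₂²`, and then
there are two in each hemisphere, `(±a, y, z)`. No critical point lies on the equator, and the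
half-turn `(x₀, x₁, x₂) ↦ (x₀, -x₁, -x₂)` maps `Φₜ` to `-Φₜ`, hence preserves critical points
and swaps the hemispheres: each hemisphere holds `3 + 2` or `3 + 0` of them.
-/

open Set

theorem Function.Involutive.encard_sep_neg_eq {α β : Type*} [AddCommGroup β] [LinearOrder β]
    [IsOrderedAddMonoid β] {σ : α → α} (hσ : σ.Involutive) {S : Set α} (hS : MapsTo σ S S)
    {f : α → β} (hf : ∀ x, f (σ x) = -f x) :
    {x ∈ S | f x < 0}.encard = {x ∈ S | 0 < f x}.encard := by
  have : {x ∈ S | f x < 0} = σ '' {x ∈ S | 0 < f x} := by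
    rw [hσ.image_eq_preimage_symm]
    ext x
    simp only [mem_sep_iff, mem_preimage, hf, Left.neg_pos_iff]
    exact and_congr_left fun _ => ⟨fun h => hS h, fun h => hσ x ▸ hS h⟩
  rw [this, hσ.injective.injOn.encard_image]

lemma abs_lt_sqrt_two_mul_abs_iff {a b : ℝ} : |a| < √2 * |b| ↔ a ^ 2 < 2 * b ^ 2 := by
  rw [← abs_of_nonneg (Real.sqrt_nonneg 2), ← abs_mul, ← sq_lt_sq, mul_pow,
    Real.sq_sqrt zero_le_two]

lemma sqrt_two_mul_abs_lt_abs_iff {a b : ℝ} : √2 * |b| < |a| ↔ 2 * b ^ 2 < a ^ 2 := by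
  rw [← abs_of_nonneg (Real.sqrt_nonneg 2), ← abs_mul, ← sq_lt_sq, mul_pow,
    Real.sq_sqrt zero_le_two]

lemma eq_vec3_iff {x : EuclideanSpace ℝ (Fin 3)} {a b c : ℝ} :
    x = !₂[a, b, c] ↔ x 0 = a ∧ x 1 = b ∧ x 2 = c := by
  refine ⟨by rintro rfl; simp, fun ⟨h0, h1, h2⟩ => ?_⟩
  ext i
  fin_cases i <;> simpa

lemma gradient_tracePot (A₂ A₃ : ℝ) (x : EuclideanSpace ℝ (Fin 3)) :
    gradient (tracePot A₂ A₃) x =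
      !₂[2 * A₂ * x 0 * x 1, A₂ * x 0 ^ 2 + 2 * A₃ * x 1 * x 2, A₃ * x 1 ^ 2] := by
  refine HasGradientAt.gradient ?_
  rw [hasGradientAt_iff_hasFDerivAt]
  have hproj (i : Fin 3) : HasFDerivAt (fun y : EuclideanSpace ℝ (Fin 3) => y i)
      (EuclideanSpace.proj i : EuclideanSpace ℝ (Fin 3) →L[ℝ] ℝ) x :=
    (EuclideanSpace.proj i : EuclideanSpace ℝ (Fin 3) →L[ℝ] ℝ).hasFDerivAt
  refine HasFDerivAt.congr_fderiv (f := tracePot A₂ A₃) ((((hproj 0).pow 2).const_mul A₂).mul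
    (hproj 1) |>.add ((((hproj 1).pow 2).const_mul A₃).mul (hproj 2))) ?_
  ext v
  simp only [add_apply, smul_apply, PiLp.proj_apply,
    InnerProductSpace.toDual_apply_apply, PiLp.inner_apply, RCLike.inner_apply, Fin.sum_univ_three,
    Nat.add_one_sub_one, pow_one, nsmul_eq_mul, smul_eq_mul, Real.ringHom_apply,
    Matrix.cons_val_zero, Matrix.cons_val_one, Matrix.cons_val]
  ring

section Coordinates

variable {A₂ A₃ : ℝ} {x : EuclideanSpace ℝ (Fin 3)}

lemma mem_traceCrit_iff :
    x ∈ traceCrit A₂ A₃ ↔ x 0 ^ 2 + x 1 ^ 2 + x 2 ^ 2 = 1 ∧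
      ∃ c : ℝ, c * x 0 = 2 * A₂ * x 0 * x 1 ∧ c * x 1 = A₂ * x 0 ^ 2 + 2 * A₃ * x 1 * x 2 ∧
        c * x 2 = A₃ * x 1 ^ 2 := by
  simp only [traceCrit, mem_ofPred_eq, gradient_tracePot, eq_comm (a := !₂[_, _, _]), eq_vec3_iff,
    PiLp.smul_apply, smul_eq_mul]

lemma mem_traceCrit_iff_of_x0_eq_zero (hA₃ : A₃ ≠ 0) (h0 : x 0 = 0) :
    x ∈ traceCrit A₂ A₃ ↔ x 1 ^ 2 + x 2 ^ 2 = 1 ∧ (x 1 = 0 ∨ x 1 ^ 2 = 2 * x 2 ^ 2) := by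
  simp only [mem_traceCrit_iff, h0]
  refine and_congr (by ring_nf) ⟨fun ⟨c, _, h1, h2⟩ => ?_, ?_⟩
  · refine or_iff_not_imp_left.2 fun hx1 => mul_left_cancel₀ hA₃ ?_
    have hc : c = 2 * A₃ * x 2 := mul_right_cancel₀ hx1 (by linear_combination h1)
    linear_combination -h2 + x 2 * hc
  · rintro (hx1 | hx1)
    · exact ⟨0, by simp [hx1]⟩
    · exact ⟨2 * A₃ * x 2, by ring, by ring, by linear_combination -A₃ * hx1⟩

lemma mem_traceCrit_iff_of_x0_ne_zero (hA₂ : A₂ ≠ 0) (hA₃ : A₃ ≠ 0) (h0 : x 0 ≠ 0) :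
    x ∈ traceCrit A₂ A₃ ↔ x 0 ^ 2 + x 1 ^ 2 + x 2 ^ 2 = 1 ∧
      A₃ * x 1 = 2 * A₂ * x 2 ∧ A₃ ^ 2 * x 0 ^ 2 = 4 * (2 * A₂ ^ 2 - A₃ ^ 2) * x 2 ^ 2 := by
  rw [mem_traceCrit_iff]
  refine and_congr_right fun _ => ⟨fun ⟨c, e0, e1, e2⟩ => ?_, fun ⟨h1, h2⟩ => ?_⟩
  · have hc : c = 2 * A₂ * x 1 := mul_right_cancel₀ h0 (by linear_combination e0)
    subst hc
    have hx1 : x 1 ≠ 0 := by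
      intro hx1
      rw [hx1] at e1
      have : A₂ * x 0 ^ 2 = 0 := by linear_combination -e1
      simp [hA₂, h0] at this
    have h1 : A₃ * x 1 = 2 * A₂ * x 2 := mul_right_cancel₀ hx1 (by linear_combination -e2)
    refine ⟨h1, mul_left_cancel₀ hA₂ ?_⟩
    linear_combination -A₃ ^ 2 * e1 + (2 * A₂ * (A₃ * x 1 + 2 * A₂ * x 2) - 2 * A₃ ^ 2 * x 2) * h1
  · refine ⟨2 * A₂ * x 1, by ring, mul_left_cancel₀ (pow_ne_zero 2 hA₃) ?_,
      by linear_combination -x 1 * h1⟩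
    linear_combination -A₂ * h2 + (2 * A₂ * (A₃ * x 1 + 2 * A₂ * x 2) - 2 * A₃ ^ 2 * x 2) * h1

lemma x2_ne_zero_of_mem_traceCrit (hA₂ : A₂ ≠ 0) (hA₃ : A₃ ≠ 0) (hx : x ∈ traceCrit A₂ A₃) :
    x 2 ≠ 0 := by
  intro h2
  by_cases h0 : x 0 = 0
  · obtain ⟨hs, h1 | h1⟩ := (mem_traceCrit_iff_of_x0_eq_zero hA₃ h0).1 hx <;>
      simp_all
  · have := ((mem_traceCrit_iff_of_x0_ne_zero hA₂ hA₃ h0).1 hx).2.2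
    simp_all

lemma traceCrit_subset_x0_eq_zero (hA₂ : A₂ ≠ 0) (hle : 2 * A₂ ^ 2 ≤ A₃ ^ 2) :
    traceCrit A₂ A₃ ⊆ {x | x 0 = 0} := by
  have hA₃ : A₃ ≠ 0 := by
    rintro rfl
    have : 0 < A₂ ^ 2 := by positivity
    linarith
  intro x hx
  by_contra h0
  change x 0 ≠ 0 at h0
  have key := ((mem_traceCrit_iff_of_x0_ne_zero hA₂ hA₃ h0).1 hx).2.2
  have : 0 < A₃ ^ 2 * x 0 ^ 2 := by positivity
  nlinarith [sq_nonneg (x 2)]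

end Coordinates

noncomputable def halfTurn (x : EuclideanSpace ℝ (Fin 3)) : EuclideanSpace ℝ (Fin 3) :=
  !₂[x 0, -x 1, -x 2]

lemma halfTurn_involutive : Function.Involutive halfTurn := fun x => by
  ext i
  fin_cases i <;> simp [halfTurn]

lemma mapsTo_halfTurn_traceCrit (A₂ A₃ : ℝ) :
    MapsTo halfTurn (traceCrit A₂ A₃) (traceCrit A₂ A₃) := by
  intro x hx
  obtain ⟨hs, c, e0, e1, e2⟩ := mem_traceCrit_iff.1 hx
  refine mem_traceCrit_iff.2 ⟨?_, -c, ?_, ?_, ?_⟩ <;>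
    simp only [halfTurn, Matrix.cons_val_zero, Matrix.cons_val_one, Matrix.cons_val]
  · linear_combination hs
  · linear_combination -e0
  · linear_combination e1
  · linear_combination e2

def upperCrit (A₂ A₃ : ℝ) : Set (EuclideanSpace ℝ (Fin 3)) :=
  {x ∈ traceCrit A₂ A₃ | 0 < x 2}

lemma encard_traceCrit_lower (A₂ A₃ : ℝ) :
    {x ∈ traceCrit A₂ A₃ | x 2 < 0}.encard = (upperCrit A₂ A₃).encard :=
  halfTurn_involutive.encard_sep_neg_eq (mapsTo_halfTurn_traceCrit A₂ A₃) (f := fun x => x 2)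
    fun x => by simp [halfTurn]

lemma encard_traceCrit {A₂ A₃ : ℝ} (hA₂ : A₂ ≠ 0) (hA₃ : A₃ ≠ 0) :
    (traceCrit A₂ A₃).encard =
      (upperCrit A₂ A₃).encard + {x ∈ traceCrit A₂ A₃ | x 2 < 0}.encard := by
  rw [← encard_union_eq]
  · congr 1
    ext x
    simp only [upperCrit, mem_union, mem_sep_iff, ← and_or_left, iff_self_and]
    exact fun hx => (x2_ne_zero_of_mem_traceCrit hA₂ hA₃ hx).symm.lt_or_gt
  · exact disjoint_left.2 fun x h h' => h.2.asymm h'.2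

section UpperHemisphere

variable {A₂ A₃ : ℝ}

lemma upperCrit_inter_x0_eq_zero_eq (hA₃ : A₃ ≠ 0) {b z : ℝ} (hz : 0 < z) (hz2 : 3 * z ^ 2 = 1)
    (hb : b ^ 2 = 2 * z ^ 2) :
    upperCrit A₂ A₃ ∩ {x | x 0 = 0} = {!₂[0, 0, 1], !₂[0, b, z], !₂[0, -b, z]} := by
  ext x
  simp only [upperCrit, mem_inter_iff, mem_ofPred_eq, mem_insert_iff, mem_singleton_iff,
    eq_vec3_iff]
  constructor
  · rintro ⟨⟨hx, hx2⟩, h0⟩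
    obtain ⟨hs, h1 | h1⟩ := (mem_traceCrit_iff_of_x0_eq_zero hA₃ h0).1 hx
    · refine Or.inl ⟨h0, h1, (sq_eq_sq₀ hx2.le zero_le_one).1 ?_⟩
      rw [h1] at hs
      linear_combination hs
    · have hxz : x 2 = z := (sq_eq_sq₀ hx2.le hz.le).1 (by linear_combination (hs - h1 - hz2) / 3)
      rw [hxz] at h1
      rcases sq_eq_sq_iff_eq_or_eq_neg.1 (h1.trans hb.symm) with hxb | hxb
      exacts [Or.inr (Or.inl ⟨h0, hxb, hxz⟩), Or.inr (Or.inr ⟨h0, hxb, hxz⟩)]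
  · rintro (⟨h0, h1, h2⟩ | ⟨h0, h1, h2⟩ | ⟨h0, h1, h2⟩) <;>
      refine ⟨⟨(mem_traceCrit_iff_of_x0_eq_zero hA₃ h0).2 ?_, by simp [h2, hz]⟩, h0⟩ <;>
      rw [h1, h2]
    · norm_num
    · exact ⟨by linear_combination hb + hz2, Or.inr hb⟩
    · exact ⟨by linear_combination hb + hz2, Or.inr (by linear_combination hb)⟩

lemma encard_upperCrit_inter_x0_eq_zero (hA₃ : A₃ ≠ 0) :
    (upperCrit A₂ A₃ ∩ {x | x 0 = 0}).encard = 3 := by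
  obtain ⟨z, hz, hz2⟩ : ∃ z : ℝ, 0 < z ∧ 3 * z ^ 2 = 1 :=
    ⟨√(1 / 3), by positivity, by rw [Real.sq_sqrt (by positivity)]; norm_num⟩
  obtain ⟨b, hb, hb2⟩ : ∃ b : ℝ, 0 < b ∧ b ^ 2 = 2 * z ^ 2 :=
    ⟨√2 * z, by positivity, by rw [mul_pow, Real.sq_sqrt zero_le_two]⟩
  rw [upperCrit_inter_x0_eq_zero_eq hA₃ hz hz2 hb2, encard_eq_three]
  refine ⟨_, _, _, ?_, ?_, ?_, rfl⟩ <;> simp [hb.ne, hb.ne', CharZero.eq_neg_self_iff]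

lemma upperCrit_diff_x0_eq_zero_eq (hA₂ : A₂ ≠ 0) (hA₃ : A₃ ≠ 0) {a y z : ℝ} (ha : 0 < a)
    (hz : 0 < z) (hs : a ^ 2 + y ^ 2 + z ^ 2 = 1) (hy : A₃ * y = 2 * A₂ * z)
    (ha2 : A₃ ^ 2 * a ^ 2 = 4 * (2 * A₂ ^ 2 - A₃ ^ 2) * z ^ 2) :
    upperCrit A₂ A₃ \ {x | x 0 = 0} = {!₂[a, y, z], !₂[-a, y, z]} := by
  have height (u v w : ℝ) (hs : u ^ 2 + v ^ 2 + w ^ 2 = 1) (h1 : A₃ * v = 2 * A₂ * w)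
      (h2 : A₃ ^ 2 * u ^ 2 = 4 * (2 * A₂ ^ 2 - A₃ ^ 2) * w ^ 2) :
      (12 * A₂ ^ 2 - 3 * A₃ ^ 2) * w ^ 2 = A₃ ^ 2 := by
    linear_combination A₃ ^ 2 * hs - h2 - (A₃ * v + 2 * A₂ * w) * h1
  have hD : 12 * A₂ ^ 2 - 3 * A₃ ^ 2 ≠ 0 := by
    have : 0 < A₃ ^ 2 * a ^ 2 := by positivity
    have : 0 < z ^ 2 := by positivity
    nlinarith
  ext x
  simp only [upperCrit, mem_sdiff, mem_ofPred_eq, mem_insert_iff, mem_singleton_iff, eq_vec3_iff]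
  constructor
  · rintro ⟨⟨hx, hx2⟩, h0⟩
    obtain ⟨hxs, h1, h2⟩ := (mem_traceCrit_iff_of_x0_ne_zero hA₂ hA₃ h0).1 hx
    have hxz : x 2 = z := (sq_eq_sq₀ hx2.le hz.le).1 <|
      mul_left_cancel₀ hD ((height _ _ _ hxs h1 h2).trans (height _ _ _ hs hy ha2).symm)
    have hxy : x 1 = y := mul_left_cancel₀ hA₃ (by rw [h1, hy, hxz])
    have hxa : x 0 ^ 2 = a ^ 2 := mul_left_cancel₀ (pow_ne_zero 2 hA₃) (by rw [h2, ha2, hxz])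
    rcases sq_eq_sq_iff_eq_or_eq_neg.1 hxa with hxa | hxa
    exacts [Or.inl ⟨hxa, hxy, hxz⟩, Or.inr ⟨hxa, hxy, hxz⟩]
  · rintro (⟨h0, h1, h2⟩ | ⟨h0, h1, h2⟩)
    · have h0' : x 0 ≠ 0 := h0 ▸ ha.ne'
      refine ⟨⟨(mem_traceCrit_iff_of_x0_ne_zero hA₂ hA₃ h0').2 ?_, h2 ▸ hz⟩, h0'⟩
      rw [h0, h1, h2]
      exact ⟨hs, hy, ha2⟩
    · have h0' : x 0 ≠ 0 := h0 ▸ neg_ne_zero.2 ha.ne'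
      refine ⟨⟨(mem_traceCrit_iff_of_x0_ne_zero hA₂ hA₃ h0').2 ?_, h2 ▸ hz⟩, h0'⟩
      rw [h0, h1, h2, neg_sq]
      exact ⟨hs, hy, ha2⟩

lemma encard_upperCrit_diff_x0_eq_zero (hA₂ : A₂ ≠ 0) (hA₃ : A₃ ≠ 0)
    (hlt : A₃ ^ 2 < 2 * A₂ ^ 2) :
    (upperCrit A₂ A₃ \ {x | x 0 = 0}).encard = 2 := by
  have hD : 0 < 12 * A₂ ^ 2 - 3 * A₃ ^ 2 := by nlinarith [sq_nonneg A₃]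
  obtain ⟨z, hz, hz2⟩ : ∃ z : ℝ, 0 < z ∧ (12 * A₂ ^ 2 - 3 * A₃ ^ 2) * z ^ 2 = A₃ ^ 2 :=
    ⟨√(A₃ ^ 2 / (12 * A₂ ^ 2 - 3 * A₃ ^ 2)), by positivity, by
      rw [Real.sq_sqrt (by positivity)]; field_simp⟩
  obtain ⟨a, ha, ha2⟩ : ∃ a : ℝ, 0 < a ∧
      (12 * A₂ ^ 2 - 3 * A₃ ^ 2) * a ^ 2 = 4 * (2 * A₂ ^ 2 - A₃ ^ 2) :=
    have : 0 < 2 * A₂ ^ 2 - A₃ ^ 2 := by linarith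
    ⟨√(4 * (2 * A₂ ^ 2 - A₃ ^ 2) / (12 * A₂ ^ 2 - 3 * A₃ ^ 2)), by positivity, by
      rw [Real.sq_sqrt (by positivity)]; field_simp⟩
  obtain ⟨y, hy⟩ : ∃ y : ℝ, A₃ * y = 2 * A₂ * z := ⟨2 * A₂ * z / A₃, by field_simp⟩
  have ha2' : A₃ ^ 2 * a ^ 2 = 4 * (2 * A₂ ^ 2 - A₃ ^ 2) * z ^ 2 := mul_left_cancel₀ hD.ne' <| by
    linear_combination A₃ ^ 2 * ha2 - 4 * (2 * A₂ ^ 2 - A₃ ^ 2) * hz2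
  have hs : a ^ 2 + y ^ 2 + z ^ 2 = 1 :=
    mul_left_cancel₀ (mul_ne_zero hD.ne' (pow_ne_zero 2 hA₃)) <| by
      linear_combination A₃ ^ 2 * ha2 + (12 * A₂ ^ 2 - 3 * A₃ ^ 2) * (A₃ * y + 2 * A₂ * z) * hy +
        (4 * A₂ ^ 2 + A₃ ^ 2) * hz2
  rw [upperCrit_diff_x0_eq_zero_eq hA₂ hA₃ ha hz hs hy ha2', encard_pair]
  simp [ha.ne', CharZero.eq_neg_self_iff]

lemma upperCrit_diff_x0_eq_zero_eq_empty (hA₂ : A₂ ≠ 0) (hle : 2 * A₂ ^ 2 ≤ A₃ ^ 2) :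
    upperCrit A₂ A₃ \ {x | x 0 = 0} = ∅ :=
  sdiff_eq_empty.2 <| (sep_subset (traceCrit A₂ A₃) _).trans (traceCrit_subset_x0_eq_zero hA₂ hle)

end UpperHemisphere

theorem stmt15 (A₂ A₃ : ℝ) (hA₂ : A₂ ≠ 0) :
    (0 < |A₃| ∧ |A₃| < Real.sqrt 2 * |A₂| →
      (traceCrit A₂ A₃).encard = 10 ∧
      {x ∈ traceCrit A₂ A₃ | 0 < x 2}.encard = 5 ∧
      {x ∈ traceCrit A₂ A₃ | x 2 < 0}.encard = 5) ∧
    (Real.sqrt 2 * |A₂| < |A₃| →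
      (traceCrit A₂ A₃).encard = 6 ∧
      {x ∈ traceCrit A₂ A₃ | 0 < x 2}.encard = 3 ∧
      {x ∈ traceCrit A₂ A₃ | x 2 < 0}.encard = 3) := by
  have hlower := encard_traceCrit_lower A₂ A₃
  have hupper := (encard_sdiff_add_encard_inter (upperCrit A₂ A₃)
    {x : EuclideanSpace ℝ (Fin 3) | x 0 = 0}).symm
  refine ⟨fun ⟨hA₃, hlt⟩ => ?_, fun hgt => ?_⟩
  · rw [abs_lt_sqrt_two_mul_abs_iff] at hlt
    replace hA₃ : A₃ ≠ 0 := abs_pos.1 hA₃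
    have h5 : (upperCrit A₂ A₃).encard = 5 := by
      rw [hupper, encard_upperCrit_diff_x0_eq_zero hA₂ hA₃ hlt,
        encard_upperCrit_inter_x0_eq_zero hA₃]
      rfl
    exact ⟨by rw [encard_traceCrit hA₂ hA₃, hlower, h5]; rfl, h5, hlower.trans h5⟩
  · rw [sqrt_two_mul_abs_lt_abs_iff] at hgt
    have hA₃ : A₃ ≠ 0 := by
      rintro rfl
      have : 0 < A₂ ^ 2 := by positivity
      linarith
    have h3 : (upperCrit A₂ A₃).encard = 3 := by
      rw [hupper, upperCrit_diff_x0_eq_zero_eq_empty hA₂ hgt.le, encard_empty,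
        encard_upperCrit_inter_x0_eq_zero hA₃, zero_add]
    exact ⟨by rw [encard_traceCrit hA₂ hA₃, hlower, h3]; rfl, h3, hlower.trans h3⟩
end

section
/- Let A₂, A₃ ∈ ℝ with A₂ ≠ 0 and A₃ ≠ 0. Then the trace-type octupolar potential Φₜ(x₁,x₂,x₃) = A₂x₁²x₂ + A₃x₂²x₃ has no critical point on the equator of the unit sphere: there is no x = (x₁,x₂,0) with x₁²+x₂² = 1 such that ∇Φₜ(x) is a scalar multiple of x. -/
lemma hasGradientAt_tracePot (A₂ A₃ : ℝ) (x : EuclideanSpace ℝ (Fin 3)) :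
    HasGradientAt (tracePot A₂ A₃)
      !₂[2 * A₂ * x 0 * x 1, A₂ * x 0 ^ 2 + 2 * A₃ * x 1 * x 2, A₃ * x 1 ^ 2] x := by
  have hproj (i : Fin 3) : HasFDerivAt (fun y : EuclideanSpace ℝ (Fin 3) => y i)
      (EuclideanSpace.proj i : EuclideanSpace ℝ (Fin 3) →L[ℝ] ℝ) x :=
    (EuclideanSpace.proj i : EuclideanSpace ℝ (Fin 3) →L[ℝ] ℝ).hasFDerivAt
  have h := ((((hproj 0).pow 2).const_mul A₂).mul (hproj 1)).add
    ((((hproj 1).pow 2).const_mul A₃).mul (hproj 2))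
  rw [hasGradientAt_iff_hasFDerivAt]
  refine h.congr_fderiv ?_
  ext v
  simp [PiLp.inner_apply, Fin.sum_univ_three]
  ring

theorem stmt17 (A₂ A₃ : ℝ) (hA₂ : A₂ ≠ 0) (hA₃ : A₃ ≠ 0) :
    ¬ ∃ x₁ x₂ : ℝ, x₁ ^ 2 + x₂ ^ 2 = 1 ∧
      ∃ c : ℝ,
        gradient (tracePot A₂ A₃) ((WithLp.equiv 2 (Fin 3 → ℝ)).symm ![x₁, x₂, 0])
          = c • (WithLp.equiv 2 (Fin 3 → ℝ)).symm ![x₁, x₂, 0] := by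
  rintro ⟨x₁, x₂, hsum, c, hgrad⟩
  rw [(hasGradientAt_tracePot A₂ A₃ _).gradient] at hgrad
  have hx₂ : x₂ = 0 := by
    have h₂ : A₃ = 0 ∨ x₂ = 0 := by simpa using congrArg (· 2) hgrad
    exact h₂.resolve_left hA₃
  have hx₁ : x₁ = 0 := by
    have h₁ : A₂ * x₁ ^ 2 = c * x₂ := by simpa using congrArg (· 1) hgrad
    rw [hx₂, mul_zero] at h₁
    exact pow_eq_zero_iff two_ne_zero |>.mp ((mul_eq_zero.mp h₁).resolve_left hA₂)
  rw [hx₁, hx₂] at hsum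
  norm_num at hsum
end
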